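/- arXiv:2503.10268 — 4 statements merged into one kernel-verified Lean document; each statement's English description precedes it below -/
import Mathlib

section
/- Let k ≥ 4 and n ≥ k + 1 be integers, let G be a W_k-saturated graph on n vertices, and let u be a vertex of G with degree n − 1. Then the induced subgraph G − u (obtained by deleting u) is C_k-saturated. -/
open SimpleGraph

/-- `G` contains a copy of `F`, i.e. a subgraph isomorphic to `F`. -/
def HasCopy {V W : Type*} (F : SimpleGraph V) (G : SimpleGraph W) : Prop :=
  ∃ f : F →g G, Function.Injective f

/-- `G` is `F`-free: `G` contains no subgraph isomorphic to `F`. -/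
def IsFree {V W : Type*} (F : SimpleGraph V) (G : SimpleGraph W) : Prop :=
  ¬ HasCopy F G

/-- `G` is `F`-semi-saturated: for every pair of non-adjacent vertices `u ≠ v`,
the graph `G + uv` contains a copy of `F` using the edge `uv`. -/
def IsSemiSat {V W : Type*} (F : SimpleGraph V) (G : SimpleGraph W) : Prop :=
  ∀ u v : W, u ≠ v → ¬ G.Adj u v →
    ∃ f : F →g (G ⊔ fromEdgeSet {s(u, v)}), Function.Injective f ∧
      ∃ a b : V, F.Adj a b ∧ f a = u ∧ f b = v

/-- `G` is `F`-saturated: `F`-free and `F`-semi-saturated. -/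
def IsSat {V W : Type*} (F : SimpleGraph V) (G : SimpleGraph W) : Prop :=
  IsFree F G ∧ IsSemiSat F G

/-- The join `G ∨ H` of two graphs. -/
def graphJoin {V W : Type*} (G : SimpleGraph V) (H : SimpleGraph W) :
    SimpleGraph (V ⊕ W) where
  Adj x y :=
    match x, y with
    | Sum.inl a, Sum.inl b => G.Adj a b
    | Sum.inr a, Sum.inr b => H.Adj a b
    | Sum.inl _, Sum.inr _ => True
    | Sum.inr _, Sum.inl _ => True
  symm := ⟨by rintro (a | a) (b | b) h <;> first | exact G.adj_symm h | exact H.adj_symm h | trivial⟩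
  loopless := ⟨by rintro (a | a) h <;> first | exact G.irrefl h | exact H.irrefl h⟩

/-- The wheel `W_k = K_1 ∨ C_k`. -/
def wheel (k : ℕ) : SimpleGraph (Unit ⊕ Fin k) :=
  graphJoin (⊥ : SimpleGraph Unit) (cycleGraph k)

/-- `sat(n, F)`: the minimum number of edges in an `F`-saturated graph on `n` vertices. -/
noncomputable def satNumber {V : Type*} (F : SimpleGraph V) (n : ℕ) : ℕ :=
  sInf { m | ∃ G : SimpleGraph (Fin n), IsSat F G ∧ G.edgeSet.ncard = m }

/-- `ssat(n, F)`: the minimum number of edges in an `F`-semi-saturated graph on `n` vertices. -/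
noncomputable def ssatNumber {V : Type*} (F : SimpleGraph V) (n : ℕ) : ℕ :=
  sInf { m | ∃ G : SimpleGraph (Fin n), IsSemiSat F G ∧ G.edgeSet.ncard = m }

/-! The universal vertex `u` turns any `C_k` of `G - u` into a `W_k` of `G`, so `G - u` is
`C_k`-free. A non-edge `vw` of `G - u` completes a `W_k` through `vw` in `G + vw`. If `u` lies
on its rim, putting the hub in place of `u` gives a `C_k` through `vw` avoiding `u`. If `vw` is a
spoke with hub `v`, put `v` in place of `u` (or next to `w` when `u` is not on the rim): the
resulting cycle must use `vw`, since otherwise it is a `C_k` of `G` avoiding `u`, and `u` would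
be the hub of a `W_k` in `G`. -/

open Function

namespace SimpleGraph

variable {V W : Type*}

def HasCopyThrough (F : SimpleGraph V) (H : SimpleGraph W) (x y : W) : Prop :=
  ∃ f : F →g H, Injective f ∧ ∃ a b, F.Adj a b ∧ f a = x ∧ f b = y

theorem HasCopyThrough.symm {F : SimpleGraph V} {H : SimpleGraph W} {x y : W}
    (h : HasCopyThrough F H x y) : HasCopyThrough F H y x := by
  obtain ⟨f, hf, a, b, hab, ha, hb⟩ := h
  exact ⟨f, hf, b, a, hab.symm, hb, ha⟩

theorem HasCopyThrough.induce {F : SimpleGraph V} {H : SimpleGraph W} {s : Set W} {x y : s}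
    (f : F →g H) (hf : Injective f) (hfs : ∀ a, f a ∈ s) {a b : V} (hab : F.Adj a b)
    (ha : f a = x) (hb : f b = y) : HasCopyThrough F (H.induce s) x y :=
  ⟨⟨fun t => ⟨f t, hfs t⟩, f.map_adj⟩, fun _ _ h => hf (congrArg Subtype.val h),
    a, b, hab, Subtype.ext ha, Subtype.ext hb⟩

theorem induce_sup_fromEdgeSet (G : SimpleGraph W) (s : Set W) (x y : s) :
    (G ⊔ fromEdgeSet {s(↑x, ↑y)}).induce s = G.induce s ⊔ fromEdgeSet {s(x, y)} := by
  ext a b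
  simp [Subtype.ext_iff]

theorem IsUniversal.of_ncard_neighborSet [Finite W] {G : SimpleGraph W} {u : W}
    (h : (G.neighborSet u).ncard = Nat.card W - 1) : G.IsUniversal u := by
  refine neighborSet_eq_compl_singleton.mp
    (Set.eq_of_subset_of_ncard_le (G.neighborSet_subset_compl u) ?_)
  rw [h, Set.ncard_compl, Set.ncard_singleton]

section update

variable [DecidableEq V] {F : SimpleGraph V} {H : SimpleGraph W}

def Hom.update (f : F →g H) (i : V) (c : W) (hc : ∀ t, F.Adj i t → H.Adj c (f t)) :
    F →g H where
  toFun := Function.update f i c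
  map_rel' {a b} hab := by
    by_cases ha : a = i <;> by_cases hb : b = i
    · exact absurd (ha.trans hb.symm) hab.ne
    · simpa [ha, hb] using hc b (ha ▸ hab)
    · simpa [ha, hb] using (hc a (hb ▸ hab.symm)).symm
    · simpa [ha, hb] using f.map_adj hab

@[simp]
theorem Hom.coe_update (f : F →g H) (i : V) (c : W) (hc : ∀ t, F.Adj i t → H.Adj c (f t)) :
    ⇑(f.update i c hc) = Function.update f i c :=
  rfl

theorem Hom.update_injective {f : F →g H} (hf : Injective f) (i : V) {c : W}
    (hcf : c ∉ Set.range f) (hc : ∀ t, F.Adj i t → H.Adj c (f t)) :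
    Injective (f.update i c hc) := by
  intro a b hab
  by_cases ha : a = i <;> by_cases hb : b = i
  · exact ha.trans hb.symm
  · exact absurd ⟨b, by simpa [ha, hb] using hab.symm⟩ hcf
  · exact absurd ⟨a, by simpa [ha, hb] using hab⟩ hcf
  · exact hf (by simpa [ha, hb] using hab)

end update

theorem adj_of_le_sup_fromEdgeSet {G H : SimpleGraph W} {x y p q : W}
    (hH : H ≤ G ⊔ fromEdgeSet {s(x, y)}) (h : H.Adj p q) (hpq : s(p, q) ≠ s(x, y)) :
    G.Adj p q := by
  simpa [hpq] using hH h

theorem cycleGraph_exists_adj {k : ℕ} (hk : 2 ≤ k) (b : Fin k) :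
    ∃ i, (cycleGraph k).Adj i b := by
  obtain ⟨m, rfl⟩ := Nat.exists_eq_add_of_le' hk
  exact ⟨b + 1, cycleGraph_adj.mpr (Or.inl (add_sub_cancel_left b 1))⟩

section wheel

variable {k : ℕ}

def wheelRim (k : ℕ) : cycleGraph k →g wheel k := ⟨Sum.inr, fun h => h⟩

@[simp]
theorem wheelRim_apply (t : Fin k) : wheelRim k t = Sum.inr t :=
  rfl

theorem injective_comp_wheelRim {H : SimpleGraph W} {f : wheel k →g H} (hf : Injective f) :
    Injective (f.comp (wheelRim k)) :=
  fun _ _ h => Sum.inr_injective (hf h)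

theorem wheel_adj_inl_inr (t : Fin k) : (wheel k).Adj (Sum.inl ()) (Sum.inr t) := trivial

theorem hasCopy_wheel_of_forall_adj {H : SimpleGraph W} (r : cycleGraph k →g H)
    (hr : Injective r) {x : W} (hx : ∀ t, H.Adj x (r t)) : HasCopy (wheel k) H := by
  refine ⟨⟨Sum.elim (fun _ => x) r, ?_⟩, ?_⟩
  · rintro (_ | s) (_ | t) h
    · exact h.elim
    · exact hx t
    · exact (hx s).symm
    · exact r.map_adj h
  · rintro (_ | s) (_ | t) h
    · rfl
    · exact absurd h (hx t).ne
    · exact absurd h.symm (hx s).ne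
    · exact congrArg Sum.inr (hr h)

theorem exists_cycle_swap_hub {H : SimpleGraph W} (f : wheel k →g H) (hf : Injective f)
    (i : Fin k) : ∃ g : cycleGraph k →g H, Injective g ∧ g i = f (Sum.inl ()) ∧
      ∀ t, t ≠ i → g t = f (Sum.inr t) := by
  have hhub t : H.Adj (f (Sum.inl ())) (f.comp (wheelRim k) t) :=
    f.map_adj (wheel_adj_inl_inr t)
  have hhub_notMem : f (Sum.inl ()) ∉ Set.range (f.comp (wheelRim k)) :=
    fun ⟨t, ht⟩ => (hhub t).ne ht.symm
  refine ⟨(f.comp (wheelRim k)).update i _ (fun t _ => hhub t),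
    Hom.update_injective (injective_comp_wheelRim hf) i hhub_notMem _, by simp,
    fun t ht => by simp [ht]⟩

theorem hasCopyThrough_induce_of_rim_adj {H : SimpleGraph W} {u : W} (f : wheel k →g H)
    (hf : Injective f) {a b : Fin k} (hab : (cycleGraph k).Adj a b) {x y : ({u}ᶜ : Set W)}
    (ha : f (Sum.inr a) = x) (hb : f (Sum.inr b) = y) :
    HasCopyThrough (cycleGraph k) (H.induce {u}ᶜ) x y := by
  by_cases hu : ∃ i, f (Sum.inr i) = u
  · obtain ⟨i, hi⟩ := hu
    obtain ⟨g, hg, hgi, hgt⟩ := exists_cycle_swap_hub f hf i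
    have hai : a ≠ i := by rintro rfl; exact x.2 (ha ▸ hi)
    have hbi : b ≠ i := by rintro rfl; exact y.2 (hb ▸ hi)
    refine HasCopyThrough.induce g hg (fun t => ?_) hab ((hgt a hai).trans ha)
      ((hgt b hbi).trans hb)
    rw [Set.mem_compl_singleton_iff, ← hi]
    by_cases ht : t = i
    · rw [ht, hgi]
      exact fun h => Sum.inl_ne_inr (hf h)
    · rw [hgt t ht]
      exact fun h => ht (Sum.inr_injective (hf h))
  · exact HasCopyThrough.induce (f.comp (wheelRim k)) (injective_comp_wheelRim hf)
      (not_exists.mp hu) hab ha hb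

theorem hasCopyThrough_induce_of_hub {G H : SimpleGraph W} {u : W} (hu : G.IsUniversal u)
    (hfree : IsFree (wheel k) G) (hk : 2 ≤ k) {x y : ({u}ᶜ : Set W)}
    (hH : H ≤ G ⊔ fromEdgeSet {s(↑x, ↑y)}) (f : wheel k →g H) (hf : Injective f)
    {b : Fin k} (ha : f (Sum.inl ()) = x) (hb : f (Sum.inr b) = y) :
    HasCopyThrough (cycleGraph k) (H.induce {u}ᶜ) x y := by
  obtain ⟨i, hiu, hib⟩ : ∃ i, (∀ t, t ≠ i → f (Sum.inr t) ≠ u) ∧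
      (f (Sum.inr i) = u ∨ (cycleGraph k).Adj i b) := by
    by_cases hu' : ∃ i, f (Sum.inr i) = u
    · obtain ⟨i, hi⟩ := hu'
      exact ⟨i, fun t ht h => ht (Sum.inr_injective (hf (h.trans hi.symm))), Or.inl hi⟩
    · obtain ⟨i, hi⟩ := cycleGraph_exists_adj hk b
      exact ⟨i, fun t _ => not_exists.mp hu' t, Or.inr hi⟩
  obtain ⟨g, hg, hgi, hgt⟩ := exists_cycle_swap_hub f hf i
  have hgu : ∀ t, g t ≠ u := by
    intro t
    by_cases ht : t = i
    · rw [ht, hgi, ha]; exact x.2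
    · rw [hgt t ht]; exact hiu t ht
  by_cases hadj : (cycleGraph k).Adj i b
  · exact HasCopyThrough.induce g hg hgu hadj (hgi.trans ha) ((hgt b hadj.ne.symm).trans hb)
  exfalso
  have hbi : b ≠ i := by rintro rfl; exact y.2 (hb ▸ hib.resolve_right hadj)
  have hgx : ∀ s, g s = x → s = i := fun s hs => hg (hs.trans (hgi.trans ha).symm)
  have hgy : ∀ t, g t = y → t = b := fun t ht => hg (ht.trans ((hgt b hbi).trans hb).symm)
  have hG : ∀ s t, (cycleGraph k).Adj s t → G.Adj (g s) (g t) := by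
    intro s t hst
    refine adj_of_le_sup_fromEdgeSet hH (g.map_adj hst) ?_
    rw [Ne, Sym2.eq_iff]
    rintro (⟨hs, ht⟩ | ⟨hs, ht⟩)
    · exact hadj (hgx s hs ▸ hgy t ht ▸ hst)
    · exact hadj (hgx t ht ▸ hgy s hs ▸ hst.symm)
  exact hfree (hasCopy_wheel_of_forall_adj ⟨g, hG _ _⟩ hg (fun t => hu (hgu t).symm))

end wheel

end SimpleGraph

theorem sat_delete_conical_general (k n : ℕ) (hk : 4 ≤ k)
    (G : SimpleGraph (Fin n)) (hG : IsSat (wheel k) G)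
    (u : Fin n) (hu : (G.neighborSet u).ncard = n - 1) :
    IsSat (cycleGraph k) (G.induce ({u}ᶜ : Set (Fin n))) := by
  obtain ⟨hfree, hsat⟩ := hG
  have huniv : G.IsUniversal u := IsUniversal.of_ncard_neighborSet (by simpa using hu)
  refine ⟨fun ⟨g, hg⟩ => hfree ?_, fun x y hxy hnadj => ?_⟩
  · exact hasCopy_wheel_of_forall_adj ((Embedding.induce _).toHom.comp g)
      (Subtype.val_injective.comp hg) (fun t => huniv (Ne.symm (g t).2))
  obtain ⟨f, hf, a, b, hab, ha, hb⟩ := hsat x y (Subtype.val_injective.ne hxy) hnadj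
  change HasCopyThrough _ _ x y
  rw [← induce_sup_fromEdgeSet]
  rcases a with ⟨⟩ | a <;> rcases b with ⟨⟩ | b
  · exact hab.elim
  · exact hasCopyThrough_induce_of_hub huniv hfree (by omega) le_rfl f hf ha hb
  · exact (hasCopyThrough_induce_of_hub huniv hfree (by omega) (by rw [Sym2.eq_swap]) f hf hb
      ha).symm
  · exact hasCopyThrough_induce_of_rim_adj f hf hab ha hb

/-- If `G` is `W_k`-saturated on `n ≥ k + 1` vertices, `k ≥ 4`, and `u` has degree
`n - 1`, then `G - u` is `C_k`-saturated. -/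
theorem sat_delete_conical (k n : ℕ) (hk : 4 ≤ k) (hn : k + 1 ≤ n)
    (G : SimpleGraph (Fin n)) (hG : IsSat (wheel k) G)
    (u : Fin n) (hu : (G.neighborSet u).ncard = n - 1) :
    IsSat (cycleGraph k) (G.induce ({u}ᶜ : Set (Fin n))) :=
  sat_delete_conical_general k n hk G hG u hu
end

section
/- Let k ≥ 4 and let G be a W_k-semi-saturated graph on at least k + 1 vertices. Then for every vertex u of G, every vertex of G is at distance at most 2 from u; equivalently, the union of the closed neighbourhoods N[v] over all v ∈ N[u] equals V(G). -/
open SimpleGraph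

/-!
Every edge of the wheel `W_k` (`k ≥ 2`) lies in a triangle. So if `u` and `w` are distinct and
non-adjacent, the copy of `W_k` that semi-saturation places on the edge `uw` of `G + uw` contains a
common neighbour of `u` and `w`, and its two edges to `u` and `w` are already edges of `G`.
-/

lemma SimpleGraph.adj_of_sup_edge_adj {V : Type*} {G : SimpleGraph V} {s t x y : V}
    (h : (G ⊔ edge s t).Adj x y) (hys : y ≠ s) (hyt : y ≠ t) : G.Adj x y := by
  rcases h with h | h
  · exact h
  · rw [edge_adj] at h
    grind

lemma wheel_exists_common_adj {k : ℕ} (hk : 2 ≤ k) {a b : Unit ⊕ Fin k}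
    (hab : (wheel k).Adj a b) : ∃ c, (wheel k).Adj a c ∧ (wheel k).Adj b c := by
  obtain ⟨m, rfl⟩ : ∃ m, k = m + 2 := ⟨k - 2, by omega⟩
  have cycle_adj_succ (i : Fin (m + 2)) : (wheel (m + 2)).Adj (.inr i) (.inr (i + 1)) := by
    change (cycleGraph (m + 2)).Adj i (i + 1)
    simp [cycleGraph_adj]
  match a, b, hab with
  | .inl _, .inr i, _ => exact ⟨.inr (i + 1), trivial, cycle_adj_succ i⟩
  | .inr i, .inl _, _ => exact ⟨.inr (i + 1), cycle_adj_succ i, trivial⟩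
  | .inr _, .inr _, _ => exact ⟨.inl (), trivial, trivial⟩

theorem IsSemiSat.exists_common_adj {V W : Type*} {F : SimpleGraph V} {G : SimpleGraph W}
    (hF : ∀ a b, F.Adj a b → ∃ c, F.Adj a c ∧ F.Adj b c) (hG : IsSemiSat F G) {u w : W}
    (hne : u ≠ w) (hadj : ¬ G.Adj u w) : ∃ v, G.Adj u v ∧ G.Adj v w := by
  obtain ⟨f, hinj, a, b, hab, hfa, hfb⟩ := hG u w hne hadj
  obtain ⟨c, hac, hbc⟩ := hF a b hab
  have hcu : f c ≠ u := fun h => hac.ne' (hinj (h.trans hfa.symm))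
  have hcw : f c ≠ w := fun h => hbc.ne' (hinj (h.trans hfb.symm))
  have hu := f.map_adj hac
  have hw := f.map_adj hbc
  rw [hfa] at hu
  rw [hfb] at hw
  exact ⟨f c, adj_of_sup_edge_adj hu hcu hcw, (adj_of_sup_edge_adj hw hcu hcw).symm⟩

theorem closed_nbhd_union_general (k n : ℕ) (hk : 4 ≤ k)
    (G : SimpleGraph (Fin n)) (hG : IsSemiSat (wheel k) G) (u : Fin n) :
    (⋃ v ∈ insert u (G.neighborSet u), insert v (G.neighborSet v)) = Set.univ := by
  refine Set.eq_univ_of_forall fun w => ?_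
  simp only [Set.mem_iUnion, Set.mem_insert_iff, mem_neighborSet, exists_prop]
  by_cases hwu : w = u
  · exact ⟨u, .inl rfl, .inl hwu⟩
  by_cases huw : G.Adj u w
  · exact ⟨w, .inr huw, .inl rfl⟩
  obtain ⟨v, huv, hvw⟩ := hG.exists_common_adj (fun _ _ => wheel_exists_common_adj (by omega))
    (Ne.symm hwu) huw
  exact ⟨v, .inr huv, .inr hvw⟩

/-- If `G` is `W_k`-semi-saturated on `n ≥ k + 1` vertices with `k ≥ 4`, then for every
vertex `u`, the union of the closed neighbourhoods `N[v]` over `v ∈ N[u]` is `V(G)`. -/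
theorem closed_nbhd_union (k n : ℕ) (hk : 4 ≤ k) (hn : k + 1 ≤ n)
    (G : SimpleGraph (Fin n)) (hG : IsSemiSat (wheel k) G) (u : Fin n) :
    (⋃ v ∈ insert u (G.neighborSet u), insert v (G.neighborSet v)) = Set.univ :=
  closed_nbhd_union_general k n hk G hG u
end

section
/- Let k ≥ 4 and let G be a W_k-semi-saturated graph on at least k + 1 vertices. If x and y are distinct vertices of G both of degree 2, then x and y are not adjacent in G. -/
open SimpleGraph

/-!
Suppose `x ~ y`, both of degree 2. As `n ≥ 4` there is a vertex `u` outside the closed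
neighbourhood of `x`, and `G + xu` contains a copy of `W_k` in which `x` is the image of some
vertex `a`. Every vertex of `W_k` (`k ≥ 3`) has degree at least 3, while `x` has degree exactly 3
in `G + xu`, so the copy covers every neighbour of `x`, in particular `y`. But `y` still has
degree 2 in `G + xu`, so it cannot be the image of a vertex of degree at least 3.
-/

namespace SimpleGraph

section Join

variable {V W : Type*} (G : SimpleGraph V) (H : SimpleGraph W)

lemma graphJoin_neighborSet_inl (a : V) :
    (graphJoin G H).neighborSet (.inl a) = Sum.inl '' G.neighborSet a ∪ Set.range Sum.inr := by
  ext (b | b) <;> simp [graphJoin]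

lemma graphJoin_neighborSet_inr (b : W) :
    (graphJoin G H).neighborSet (.inr b) = Set.range Sum.inl ∪ Sum.inr '' H.neighborSet b := by
  ext (a | a) <;> simp [graphJoin]

end Join

lemma ncard_neighborSet_cycleGraph {k : ℕ} (hk : 3 ≤ k) (i : Fin k) :
    ((cycleGraph k).neighborSet i).ncard = 2 := by
  obtain ⟨m, rfl⟩ : ∃ m, k = m + 3 := ⟨k - 3, by omega⟩
  rw [cycleGraph_neighborSet, Set.ncard_pair]
  simp only [ne_eq, sub_eq_iff_eq_add, add_assoc i, left_eq_add]
  exact ne_of_beq_false rfl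

lemma three_le_ncard_neighborSet_wheel {k : ℕ} (hk : 3 ≤ k) (v : Unit ⊕ Fin k) :
    3 ≤ ((wheel k).neighborSet v).ncard := by
  rcases v with ⟨⟩ | i
  · rw [wheel, graphJoin_neighborSet_inl, Set.ncard_union_eq (by simp [Set.disjoint_left]),
      Set.ncard_range_of_injective Sum.inr_injective]
    simpa using hk
  · rw [wheel, graphJoin_neighborSet_inr, Set.ncard_union_eq (by simp [Set.disjoint_left]),
      Set.ncard_range_of_injective Sum.inl_injective,
      Set.ncard_image_of_injective _ Sum.inr_injective, ncard_neighborSet_cycleGraph hk]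
    simp

section SupEdge

variable {V : Type*} (G : SimpleGraph V) {s t : V}

lemma neighborSet_sup_edge_left (h : s ≠ t) :
    (G ⊔ edge s t).neighborSet s = insert t (G.neighborSet s) := by
  ext w
  simp only [mem_neighborSet, sup_adj, edge_adj, Set.mem_insert_iff]
  grind

lemma neighborSet_sup_edge_of_ne {v : V} (hs : v ≠ s) (ht : v ≠ t) :
    (G ⊔ edge s t).neighborSet v = G.neighborSet v := by
  ext w
  simp [edge_adj, hs, ht]

end SupEdge

namespace Hom

variable {V W : Type*} [Finite W] {F : SimpleGraph V} {H : SimpleGraph W} (f : F →g H)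

lemma ncard_neighborSet_le (hf : Function.Injective f) (v : V) :
    (F.neighborSet v).ncard ≤ (H.neighborSet (f v)).ncard := by
  rw [← Set.ncard_image_of_injective _ hf]
  exact Set.ncard_le_ncard (f.image_neighborSet_subset v)

lemma neighborSet_eq_image_of_ncard_le (hf : Function.Injective f) (v : V)
    (h : (H.neighborSet (f v)).ncard ≤ (F.neighborSet v).ncard) :
    H.neighborSet (f v) = f '' F.neighborSet v :=
  (Set.eq_of_subset_of_ncard_le (f.image_neighborSet_subset v)
    (by rwa [Set.ncard_image_of_injective _ hf])).symm

end Hom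

end SimpleGraph

/-- If `G` is `W_k`-semi-saturated on `n ≥ k + 1` vertices with `k ≥ 4`, then two
distinct vertices of degree `2` are not adjacent. -/
theorem roots_not_adjacent (k n : ℕ) (hk : 4 ≤ k) (hn : k + 1 ≤ n)
    (G : SimpleGraph (Fin n)) (hG : IsSemiSat (wheel k) G)
    (x y : Fin n) (hxy : x ≠ y)
    (hx : (G.neighborSet x).ncard = 2) (hy : (G.neighborSet y).ncard = 2) :
    ¬ G.Adj x y := by
  intro hadj
  obtain ⟨u, hu⟩ : ∃ u, u ∉ insert x (G.neighborSet x) := by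
    refine (Set.ne_univ_iff_exists_notMem _).1 fun h => ?_
    have := Set.ncard_insert_le x (G.neighborSet x)
    rw [h, Set.ncard_univ, Nat.card_eq_fintype_card, Fintype.card_fin] at this
    omega
  obtain ⟨hux, hxu⟩ : u ≠ x ∧ ¬ G.Adj x u := by simpa [not_or] using hu
  have huy : y ≠ u := by rintro rfl; exact hxu hadj
  have hx' : ((G ⊔ edge x u).neighborSet x).ncard = 3 := by
    rw [neighborSet_sup_edge_left G hux.symm,
      Set.ncard_insert_of_notMem (show u ∉ G.neighborSet x from hxu), hx]
  have hy' : ((G ⊔ edge x u).neighborSet y).ncard = 2 := by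
    rw [neighborSet_sup_edge_of_ne G hxy.symm huy, hy]
  obtain ⟨f, hf, a, -, -, hfa, -⟩ := hG x u hux.symm hxu
  have himage := f.neighborSet_eq_image_of_ncard_le hf a
    (by rw [hfa]; exact hx'.trans_le (three_le_ncard_neighborSet_wheel (by omega) a))
  obtain ⟨c, -, rfl⟩ : y ∈ f '' (wheel k).neighborSet a := by
    rw [← himage, hfa]; exact Or.inl hadj
  have := (three_le_ncard_neighborSet_wheel (by omega) c).trans
    ((f.ncard_neighborSet_le hf c).trans_eq hy')
  omega
end

section
/- Let k ≥ 6 and n ≥ (k−1)² + 1 be integers, and let G be a W_k-semi-saturated graph on n vertices with maximum degree at most n − 2 and with |A*_G| ≥ k. If no vertex of G is adjacent to every vertex of A*_G (i.e. the intersection of the neighbourhoods N(v) over all v ∈ A*_G is empty), then 2·e(G) ≥ 5n − 6(k−1)². -/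
open SimpleGraph

/-- The degree of a vertex. -/
noncomputable def degS {n : ℕ} (G : SimpleGraph (Fin n)) (u : Fin n) : ℕ :=
  (G.neighborSet u).ncard

/-- `A_G`: the vertices of degree at least `k - 1`. -/
def setA {n : ℕ} (k : ℕ) (G : SimpleGraph (Fin n)) : Set (Fin n) :=
  {u | k - 1 ≤ degS G u}

/-- `B_G`: the vertices of degree between `3` and `k - 2`. -/
def setB {n : ℕ} (k : ℕ) (G : SimpleGraph (Fin n)) : Set (Fin n) :=
  {u | 3 ≤ degS G u ∧ degS G u ≤ k - 2}

/-- `C_G`: the vertices of degree `2`. -/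
def setC {n : ℕ} (G : SimpleGraph (Fin n)) : Set (Fin n) :=
  {u | degS G u = 2}

/-- `A*_G = B_G ∪ C_G`. -/
def setAstar {n : ℕ} (k : ℕ) (G : SimpleGraph (Fin n)) : Set (Fin n) :=
  setB k G ∪ setC G

/-!
In `G + uv`, a copy of `W_k` through the new edge pins down `G` near `u` and `v`. If both have
degree at most `k - 2`, neither is the image of the hub, so the hub lands on a common neighbour of
`u` and `v` of degree at least `k`. The same rigidity makes the vertices of degree two pairwise
non-adjacent, with pairwise distinct neighbourhoods and a common neighbour for every pair; as every
vertex has a non-neighbour in `A*_G`, there are at most `4(k - 2)` of them.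

The deficit `5n - 2e(G)` is the sum of the charges `5 - deg v`. Fix `z₁ ∈ A*_G` and, for each
neighbour `x` of `z₁` of degree at least `k`, a vertex `z x ∈ A*_G` not adjacent to `x`; together
with `z₁` these form a set `S` of at most `k - 1` vertices. A vertex of degree at most four outside
the closed neighbourhood `N[z₁]` is adjacent to such an `x₁`, and, outside `N[z x₁]`, to a second
high-degree neighbour of `z x₁`. Hence the at most `(k - 1)(k - 2)` high-degree neighbours of `S`
absorb two units of charge from each low-degree vertex, up to a total shortfall of
`|N[z₁]| + |⋃_{y ∈ S} N[y]| ≤ (k - 1) + (k - 1)²`, and `5n - 2e(G) ≤ 6(k - 1)²` follows.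
-/

open Finset Function

instance (k : ℕ) : DecidableRel (wheel k).Adj
  | .inl _, .inl _ => isFalse id
  | .inr a, .inr b => inferInstanceAs (Decidable ((cycleGraph k).Adj a b))
  | .inl _, .inr _ => isTrue trivial
  | .inr _, .inl _ => isTrue trivial

namespace SimpleGraph

section Degree

variable {W : Type*} [Fintype W] (G : SimpleGraph W) [DecidableRel G.Adj]

def highNeighborFinset (k : ℕ) (y : W) : Finset W := {x ∈ G.neighborFinset y | k ≤ G.degree x}

lemma card_highNeighborFinset_le (k : ℕ) (y : W) : #(G.highNeighborFinset k y) ≤ G.degree y :=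
  (card_filter_le _ _).trans (card_neighborFinset_eq_degree G y).le

lemma sum_card_filter_adj_le_sum_degree (s t : Finset W) :
    ∑ u ∈ s, #{x ∈ t | G.Adj u x} ≤ ∑ x ∈ t, G.degree x := by
  rw [show ∑ u ∈ s, #{x ∈ t | G.Adj u x} = ∑ u ∈ s, #(t.bipartiteAbove G.Adj u) from rfl,
    sum_card_bipartiteAbove_eq_sum_card_bipartiteBelow]
  refine sum_le_sum fun x _ => ?_
  rw [← card_neighborFinset_eq_degree]
  exact card_le_card fun u hu => (mem_neighborFinset _ _ _).2 (mem_filter.1 hu).2.symm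

variable [DecidableEq W]

lemma card_insert_neighborFinset (y : W) : #(insert y (G.neighborFinset y)) = G.degree y + 1 := by
  rw [card_insert_of_notMem (by simp), card_neighborFinset_eq_degree]

lemma exists_ne_not_adj_of_degree_add_two_le {x : W} (h : G.degree x + 2 ≤ Fintype.card W) :
    ∃ y, y ≠ x ∧ ¬ G.Adj x y := by
  obtain ⟨y, -, hy⟩ := exists_mem_notMem_of_card_lt_card (t := univ)
    (s := insert x (G.neighborFinset x)) (by rw [card_univ, card_insert_neighborFinset]; omega)
  simp only [mem_insert, mem_neighborFinset, not_or] at hy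
  exact ⟨y, hy⟩

lemma card_biUnion_highNeighborFinset_le {d : ℕ} (S : Finset W) (hS : ∀ y ∈ S, G.degree y ≤ d)
    (k : ℕ) : #(S.biUnion (G.highNeighborFinset k)) ≤ #S * d :=
  card_biUnion_le_card_mul _ _ _ fun y hy => (G.card_highNeighborFinset_le k y).trans (hS y hy)

lemma card_biUnion_insert_neighborFinset_le {d : ℕ} (S : Finset W)
    (hS : ∀ y ∈ S, G.degree y ≤ d) :
    #(S.biUnion fun y => insert y (G.neighborFinset y)) ≤ #S * (d + 1) :=
  card_biUnion_le_card_mul _ _ _ fun y hy => by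
    rw [card_insert_neighborFinset]
    exact Nat.add_le_add_right (hS y hy) 1

lemma five_mul_card_add_sum_degree_le (hmin : ∀ x, 2 ≤ G.degree x) (Q : Finset W)
    (hQ : ∀ x ∈ Q, 5 ≤ G.degree x) :
    5 * Fintype.card W + ∑ x ∈ Q, G.degree x ≤
      2 * #G.edgeFinset + 2 * #{x | G.degree x ≤ 4} + #{x | G.degree x = 2} + 5 * #Q := by
  have hv (v : W) : 5 + (if v ∈ Q then G.degree v else 0) ≤ G.degree v +
      (if G.degree v ≤ 4 then 2 else 0) + (if G.degree v = 2 then 1 else 0) +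
      (if v ∈ Q then 5 else 0) := by
    have := hmin v
    have := hQ v
    split_ifs <;> omega
  have := sum_le_sum fun v (_ : v ∈ univ) => hv v
  simp only [sum_add_distrib, ← sum_filter, sum_const, card_univ, smul_eq_mul, filter_mem_eq_inter,
    univ_inter] at this
  rw [← sum_degrees_eq_twice_card_edges]
  linarith

end Degree

section SupEdge

variable {V W : Type*} {F : SimpleGraph V} {G : SimpleGraph W} {u v x y : W}

lemma adj_of_sup_edge_adj_s15 (h : (G ⊔ edge u v).Adj x y) (hu : x ≠ u) (hv : x ≠ v) : G.Adj x y := by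
  grind

variable [Fintype W] [DecidableEq W] [DecidableRel G.Adj]

lemma neighborFinset_sup_edge_subset (x : W) :
    (G ⊔ edge u v).neighborFinset x ⊆ insert (if x = u then v else u) (G.neighborFinset x) := by
  intro y
  simp only [mem_neighborFinset, sup_adj, edge_adj, mem_insert]
  grind

lemma degree_sup_edge_le (x : W) : (G ⊔ edge u v).degree x ≤ G.degree x + 1 := by
  simp only [← card_neighborFinset_eq_degree]
  exact (card_le_card (neighborFinset_sup_edge_subset x)).trans (card_insert_le _ _)

lemma degree_sup_edge_of_ne (hu : x ≠ u) (hv : x ≠ v) : (G ⊔ edge u v).degree x = G.degree x := by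
  simp only [← card_neighborFinset_eq_degree]
  congr 1
  ext y
  simp only [mem_neighborFinset]
  exact ⟨fun h => adj_of_sup_edge_adj_s15 h hu hv, fun h => Or.inl h⟩

variable [Fintype V] [DecidableRel F.Adj] {f : F →g G ⊔ edge u v}

lemma degree_le_degree_add_one_of_sup_edge (hf : Injective f) {a : V} (ha : f a = x) :
    F.degree a ≤ G.degree x + 1 :=
  ha ▸ ((f.toCopy hf).degree_le a).trans (degree_sup_edge_le _)

lemma degree_le_degree_of_sup_edge (hf : Injective f) {a : V} (ha : f a = x) (hu : x ≠ u)
    (hv : x ≠ v) : F.degree a ≤ G.degree x :=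
  ha ▸ ((f.toCopy hf).degree_le a).trans (degree_sup_edge_of_ne (ha ▸ hu) (ha ▸ hv)).le

lemma neighborFinset_subset_image_of_sup_edge (hf : Injective f) {a : V} (ha : f a = x)
    (h : G.degree x + 1 ≤ F.degree a) : G.neighborFinset x ⊆ (F.neighborFinset a).image f := by
  subst ha
  have hsub : (F.neighborFinset a).image f ⊆ (G ⊔ edge u v).neighborFinset (f a) := by
    intro y hy
    obtain ⟨b, hb, rfl⟩ := mem_image.1 hy
    exact (mem_neighborFinset _ _ _).2 (f.map_adj ((mem_neighborFinset _ _ _).1 hb))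
  have heq := eq_of_subset_of_card_le hsub (by
    rw [card_image_of_injective _ hf, card_neighborFinset_eq_degree, card_neighborFinset_eq_degree]
    exact (degree_sup_edge_le _).trans h)
  rw [heq]
  intro y hy
  exact (mem_neighborFinset _ _ _).2 (Or.inl ((mem_neighborFinset _ _ _).1 hy))

end SupEdge

section Wheel

lemma cycleGraph.exists_adj_ne_not_adj {m : ℕ} {i j : Fin (m + 4)}
    (h : (cycleGraph (m + 4)).Adj i j) :
    ∃ c, (cycleGraph (m + 4)).Adj i c ∧ c ≠ j ∧ ¬ (cycleGraph (m + 4)).Adj j c := by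
  have h1 : (1 : Fin (m + 4)) ≠ 0 := by simp
  have h2 : (2 : Fin (m + 4)) ≠ 0 := by
    simp [Fin.ext_iff, Nat.mod_eq_of_lt (show 2 < m + 4 by omega)]
  have h3 : (3 : Fin (m + 4)) ≠ 0 := by
    simp [Fin.ext_iff, Nat.mod_eq_of_lt (show 3 < m + 4 by omega)]
  -- the neighbour of `i` away from `j`: `c - j = 2 (i - j) = ±2`
  refine ⟨i + (i - j), ?_, ?_, ?_⟩ <;> simp only [cycleGraph_adj, Ne] at h ⊢ <;> grind

@[simp] lemma wheel_adj_inl_inr_s15 {k : ℕ} (x : Unit) (i : Fin k) :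
    (wheel k).Adj (.inl x) (.inr i) := trivial

@[simp] lemma wheel_adj_inr_inl {k : ℕ} (i : Fin k) (x : Unit) :
    (wheel k).Adj (.inr i) (.inl x) := trivial

@[simp] lemma wheel_adj_inr_inr {k : ℕ} {i j : Fin k} :
    (wheel k).Adj (.inr i) (.inr j) ↔ (cycleGraph k).Adj i j := Iff.rfl

lemma wheel_neighborFinset_inl (k : ℕ) :
    (wheel k).neighborFinset (.inl ()) = univ.map .inr := by
  ext (⟨⟩ | _) <;> simp

lemma wheel_neighborFinset_inr {k : ℕ} (i : Fin k) :
    (wheel k).neighborFinset (.inr i) =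
      cons (.inl ()) (((cycleGraph k).neighborFinset i).map .inr) (by simp) := by
  ext (⟨⟩ | _) <;> simp

lemma wheel_degree_inl (k : ℕ) : (wheel k).degree (.inl ()) = k := by
  simp [← card_neighborFinset_eq_degree, wheel_neighborFinset_inl]

lemma wheel_degree_inr {k : ℕ} (i : Fin k) :
    (wheel k).degree (.inr i) = (cycleGraph k).degree i + 1 := by
  simp [← card_neighborFinset_eq_degree, wheel_neighborFinset_inr]

lemma three_le_wheel_degree {k : ℕ} (hk : 3 ≤ k) (a : Unit ⊕ Fin k) : 3 ≤ (wheel k).degree a := by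
  obtain ⟨m, rfl⟩ : ∃ m, k = m + 3 := ⟨k - 3, by omega⟩
  rcases a with ⟨⟩ | i
  · rw [wheel_degree_inl]; omega
  · simp [wheel_degree_inr, cycleGraph_degree_three_le]

end Wheel

end SimpleGraph

namespace IsSemiSat

/-- `IsSemiSat` phrased with `edge u v`, which unfolds to `fromEdgeSet {s(u, v)}`. -/
lemma exists_copy_sup_edge {V W : Type*} {F : SimpleGraph V} {G : SimpleGraph W}
    (hG : IsSemiSat F G) {u v : W} (huv : u ≠ v) (h : ¬ G.Adj u v) :
    ∃ f : F →g G ⊔ edge u v, Injective f ∧ ∃ a b, F.Adj a b ∧ f a = u ∧ f b = v :=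
  hG u v huv h

section MinDegreeThree

variable {V W : Type*} [Fintype V] [Fintype W] [DecidableEq W] {F : SimpleGraph V}
  {G : SimpleGraph W} [DecidableRel F.Adj] [DecidableRel G.Adj]
  (hG : IsSemiSat F G) (hF : ∀ a, 3 ≤ F.degree a) (hW : ∀ x, ∃ y, y ≠ x ∧ ¬ G.Adj x y)
include hG hF hW

theorem two_le_degree (x : W) : 2 ≤ G.degree x := by
  obtain ⟨y, hyx, hxy⟩ := hW x
  obtain ⟨f, hf, a, -, -, ha, -⟩ := hG.exists_copy_sup_edge hyx.symm hxy
  have := degree_le_degree_add_one_of_sup_edge hf ha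
  have := hF a
  omega

theorem not_adj_of_degree_eq_two {x y : W} (hx : G.degree x = 2) (hy : G.degree y = 2) :
    ¬ G.Adj x y := by
  intro hxy
  obtain ⟨w, hwx, hxw⟩ := hW x
  obtain ⟨f, hf, a, -, -, ha, -⟩ := hG.exists_copy_sup_edge hwx.symm hxw
  obtain ⟨c, -, rfl⟩ := mem_image.1 <| neighborFinset_subset_image_of_sup_edge hf ha
    (hx ▸ hF a) ((mem_neighborFinset _ _ _).2 hxy)
  have := degree_le_degree_of_sup_edge hf rfl hxy.ne' (fun h => hxw (h ▸ hxy))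
  have := hF c
  omega

end MinDegreeThree

section Wheel

variable {W : Type*} [Fintype W] [DecidableEq W] {G : SimpleGraph W} [DecidableRel G.Adj]
  {k : ℕ} (hG : IsSemiSat (wheel k) G)
include hG

theorem exists_rim_copy {u v : W} (hu : G.degree u + 2 ≤ k) (hv : G.degree v + 2 ≤ k)
    (huv : u ≠ v) (h : ¬ G.Adj u v) :
    ∃ f : wheel k →g G ⊔ edge u v, Injective f ∧
      ∃ i j, (cycleGraph k).Adj i j ∧ f (.inr i) = u ∧ f (.inr j) = v := by
  obtain ⟨f, hf, a, b, hab, ha, hb⟩ := hG.exists_copy_sup_edge huv h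
  have not_hub {a : Unit ⊕ Fin k} {x : W} (ha : f a = x) (hx : G.degree x + 2 ≤ k) :
      a ≠ .inl () := by
    rintro rfl
    have := degree_le_degree_add_one_of_sup_edge hf ha
    rw [wheel_degree_inl] at this
    omega
  rcases a with ⟨⟩ | i
  · exact absurd rfl (not_hub ha hu)
  rcases b with ⟨⟩ | j
  · exact absurd rfl (not_hub hb hv)
  exact ⟨f, hf, i, j, hab, ha, hb⟩

theorem exists_adj_adj_le_degree {u v : W} (hu : G.degree u + 2 ≤ k) (hv : G.degree v + 2 ≤ k)
    (huv : u ≠ v) (h : ¬ G.Adj u v) : ∃ x, G.Adj u x ∧ G.Adj v x ∧ k ≤ G.degree x := by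
  obtain ⟨f, hf, i, j, -, hi, hj⟩ := hG.exists_rim_copy hu hv huv h
  have hhub_u : f (.inl ()) ≠ u := fun h => Sum.inl_ne_inr (hf (h.trans hi.symm))
  have hhub_v : f (.inl ()) ≠ v := fun h => Sum.inl_ne_inr (hf (h.trans hj.symm))
  have hadj (i : Fin k) : G.Adj (f (.inr i)) (f (.inl ())) :=
    (adj_of_sup_edge_adj_s15 (f.map_adj (wheel_adj_inl_inr_s15 () i)) hhub_u hhub_v).symm
  refine ⟨f (.inl ()), by simpa only [hi] using hadj i, by simpa only [hj] using hadj j, ?_⟩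
  have := degree_le_degree_of_sup_edge hf rfl hhub_u hhub_v
  rwa [wheel_degree_inl] at this

theorem neighborFinset_ne_of_degree_eq_two (hk : 4 ≤ k) (hW : ∀ x, ∃ y, y ≠ x ∧ ¬ G.Adj x y)
    {u v : W} (huv : u ≠ v) (hu : G.degree u = 2) (hv : G.degree v = 2) :
    G.neighborFinset u ≠ G.neighborFinset v := by
  have hF := three_le_wheel_degree (k := k) (by omega)
  obtain ⟨f, hf, i, j, hij, hi, hj⟩ := hG.exists_rim_copy (by omega) (by omega) huv
    (hG.not_adj_of_degree_eq_two hF hW hu hv)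
  obtain ⟨m, rfl⟩ : ∃ m, k = m + 4 := ⟨k - 4, by omega⟩
  obtain ⟨c, hic, hcj, hjc⟩ := cycleGraph.exists_adj_ne_not_adj hij
  have hcu : f (.inr c) ≠ u := fun h => hic.ne (Sum.inr_injective (hf (hi.trans h.symm)))
  have hcv : f (.inr c) ≠ v := fun h => hcj (Sum.inr_injective (hf (h.trans hj.symm)))
  have hmem_u : f (.inr c) ∈ G.neighborFinset u := by
    have := adj_of_sup_edge_adj_s15 (f.map_adj (wheel_adj_inr_inr.2 hic.symm)) hcu hcv
    rw [hi] at this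
    exact (mem_neighborFinset _ _ _).2 this.symm
  have hnmem_v : f (.inr c) ∉ G.neighborFinset v := fun hmem => by
    obtain ⟨b, hb, hbc⟩ := mem_image.1 <|
      neighborFinset_subset_image_of_sup_edge hf hj (hv ▸ hF _) hmem
    rw [hf hbc, mem_neighborFinset, wheel_adj_inr_inr] at hb
    exact hjc hb
  exact fun h => hnmem_v (h ▸ hmem_u)

theorem card_degree_eq_two_adj_le (hk : 4 ≤ k) (hW : ∀ x, ∃ y, y ≠ x ∧ ¬ G.Adj x y) {a z : W}
    (hz : G.degree z + 2 ≤ k) (hza : ¬ G.Adj z a) :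
    #{t | G.degree t = 2 ∧ G.Adj t a} ≤ 2 * G.degree z := by
  set T : Finset W := {t | G.degree t = 2 ∧ G.Adj t a}
  have hT {t : W} (ht : t ∈ T) : G.degree t = 2 ∧ G.Adj t a := (mem_filter.1 ht).2
  rw [← card_filter_add_card_filter_not (s := T) (G.Adj z), two_mul,
    ← card_neighborFinset_eq_degree]
  gcongr ?_ + ?_
  · exact card_le_card fun t ht => (mem_neighborFinset _ _ _).2 (mem_filter.1 ht).2
  -- a vertex `t ∈ T` not adjacent to `z` is determined by its other neighbour, a hub at `z`
  refine (card_le_card_of_injOn (fun t => G.neighborFinset t)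
    (t := (G.neighborFinset z).image ({a, ·})) ?_ ?_).trans card_image_le
  · intro t ht
    obtain ⟨ht, hzt⟩ := mem_filter.1 ht
    obtain ⟨ht2, hta⟩ := hT ht
    obtain ⟨x, htx, hzx, -⟩ := hG.exists_adj_adj_le_degree (by omega) hz
      (fun h => hza (h ▸ hta)) (fun h => hzt h.symm)
    have hax : a ≠ x := fun h => hza (h ▸ hzx)
    refine mem_image.2 ⟨x, (mem_neighborFinset _ _ _).2 hzx, eq_of_subset_of_card_le ?_ ?_⟩
    · simp [insert_subset_iff, hta, htx]
    · rw [card_pair hax, card_neighborFinset_eq_degree, ht2]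
  · intro s hs t ht hst
    by_contra hne
    exact hG.neighborFinset_ne_of_degree_eq_two hk hW hne (hT (mem_filter.1 hs).1).1
      (hT (mem_filter.1 ht).1).1 hst

theorem card_degree_eq_two_le (hk : 4 ≤ k) (hW : ∀ x, ∃ y, y ≠ x ∧ ¬ G.Adj x y)
    (hsep : ∀ x, ∃ z, G.degree z + 2 ≤ k ∧ ¬ G.Adj z x) :
    #{t | G.degree t = 2} ≤ 4 * (k - 2) := by
  rcases eq_empty_or_nonempty ({t | G.degree t = 2} : Finset W) with h | ⟨t₀, ht₀⟩
  · simp [h]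
  replace ht₀ : G.degree t₀ = 2 := (mem_filter.1 ht₀).2
  obtain ⟨a, b, -, hab⟩ := card_eq_two.1 (ht₀ ▸ card_neighborFinset_eq_degree G t₀)
  -- any two vertices of degree two have a common neighbour, which lies in `N(t₀) = {a, b}`
  have hsub : ({t | G.degree t = 2} : Finset W) ⊆
      ({t | G.degree t = 2 ∧ G.Adj t a} : Finset W) ∪
        ({t | G.degree t = 2 ∧ G.Adj t b} : Finset W) := by
    intro t ht
    replace ht : G.degree t = 2 := (mem_filter.1 ht).2
    obtain ⟨x, htx, hx⟩ : ∃ x, G.Adj t x ∧ x ∈ G.neighborFinset t₀ := by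
      by_cases h : t = t₀
      · subst h
        exact ⟨a, (mem_neighborFinset _ _ _).1 (hab ▸ mem_insert_self a {b}), by simp [hab]⟩
      obtain ⟨x, htx, ht₀x, -⟩ := hG.exists_adj_adj_le_degree (by omega) (by omega) h
        (hG.not_adj_of_degree_eq_two (three_le_wheel_degree (by omega)) hW ht ht₀)
      exact ⟨x, htx, (mem_neighborFinset _ _ _).2 ht₀x⟩
    rw [hab, mem_insert, mem_singleton] at hx
    rcases hx with rfl | rfl <;> simp [ht, htx]
  obtain ⟨za, hza, hza'⟩ := hsep a
  obtain ⟨zb, hzb, hzb'⟩ := hsep b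
  calc _ ≤ _ := card_le_card hsub
    _ ≤ _ := card_union_le _ _
    _ ≤ 2 * G.degree za + 2 * G.degree zb := add_le_add
        (hG.card_degree_eq_two_adj_le hk hW hza hza') (hG.card_degree_eq_two_adj_le hk hW hzb hzb')
    _ ≤ 4 * (k - 2) := by omega

theorem exists_mem_highNeighborFinset_adj {y u : W} (hy : G.degree y + 2 ≤ k)
    (hu : G.degree u + 2 ≤ k) (huy : u ∉ insert y (G.neighborFinset y)) :
    ∃ x ∈ G.highNeighborFinset k y, G.Adj u x := by
  rw [mem_insert, mem_neighborFinset, not_or] at huy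
  obtain ⟨x, hux, hyx, hx⟩ := hG.exists_adj_adj_le_degree hu hy huy.1 (fun h => huy.2 h.symm)
  exact ⟨x, mem_filter.2 ⟨(mem_neighborFinset _ _ _).2 hyx, hx⟩, hux⟩

theorem two_le_card_adj_highNeighborFinset (S : Finset W) (z : W → W) {z₁ : W} (hz₁ : z₁ ∈ S)
    (hS : ∀ y ∈ S, G.degree y + 2 ≤ k)
    (hz : ∀ x ∈ G.highNeighborFinset k z₁, z x ∈ S ∧ ¬ G.Adj (z x) x)
    {u : W} (hu : G.degree u + 2 ≤ k) :
    2 ≤ #{x ∈ S.biUnion (G.highNeighborFinset k) | G.Adj u x} +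
      (if u ∈ insert z₁ (G.neighborFinset z₁) then 1 else 0) +
      (if u ∈ S.biUnion (fun y => insert y (G.neighborFinset y)) then 1 else 0) := by
  have hmemQ {x y : W} (hy : y ∈ S) (hx : x ∈ G.highNeighborFinset k y) (hux : G.Adj u x) :
      x ∈ ({x ∈ S.biUnion (G.highNeighborFinset k) | G.Adj u x} : Finset W) :=
    mem_filter.2 ⟨mem_biUnion.2 ⟨y, hy, hx⟩, hux⟩
  have hmemE {y : W} (hy : y ∈ S) (h : u ∈ insert y (G.neighborFinset y)) :
      u ∈ S.biUnion (fun y => insert y (G.neighborFinset y)) :=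
    mem_biUnion.2 ⟨y, hy, h⟩
  by_cases h₁ : u ∈ insert z₁ (G.neighborFinset z₁)
  · simp [h₁, hmemE hz₁ h₁]
  obtain ⟨x₁, hx₁, hux₁⟩ := hG.exists_mem_highNeighborFinset_adj (hS z₁ hz₁) hu h₁
  obtain ⟨hzS, hzx₁⟩ := hz x₁ hx₁
  by_cases h₂ : u ∈ insert (z x₁) (G.neighborFinset (z x₁))
  · have := card_pos.2 ⟨x₁, hmemQ hz₁ hx₁ hux₁⟩
    simp only [h₁, hmemE hzS h₂, if_true, if_false]
    omega
  obtain ⟨x₂, hx₂, hux₂⟩ := hG.exists_mem_highNeighborFinset_adj (hS _ hzS) hu h₂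
  have hx₁₂ : x₁ ≠ x₂ := by
    rintro rfl
    exact hzx₁ ((mem_neighborFinset _ _ _).1 (mem_filter.1 hx₂).1)
  have := card_le_card (s := {x₁, x₂}) (insert_subset_iff.2
    ⟨hmemQ hz₁ hx₁ hux₁, singleton_subset_iff.2 (hmemQ hzS hx₂ hux₂)⟩)
  rw [card_pair hx₁₂] at this
  omega

theorem two_mul_card_le_sum_card_adj_add (S : Finset W) (z : W → W) {z₁ : W} (hz₁ : z₁ ∈ S)
    (hS : ∀ y ∈ S, G.degree y + 2 ≤ k)
    (hz : ∀ x ∈ G.highNeighborFinset k z₁, z x ∈ S ∧ ¬ G.Adj (z x) x)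
    (D : Finset W) (hD : ∀ u ∈ D, G.degree u + 2 ≤ k) :
    2 * #D ≤ ∑ u ∈ D, #{x ∈ S.biUnion (G.highNeighborFinset k) | G.Adj u x} +
      #(insert z₁ (G.neighborFinset z₁)) + #(S.biUnion fun y => insert y (G.neighborFinset y)) := by
  have := sum_le_sum fun u hu => hG.two_le_card_adj_highNeighborFinset S z hz₁ hS hz (hD u hu)
  simp only [sum_add_distrib, sum_boole, sum_const, smul_eq_mul, Nat.cast_id] at this
  have h₁ : #{u ∈ D | u ∈ insert z₁ (G.neighborFinset z₁)} ≤ _ :=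
    card_le_card fun _ hu => (mem_filter.1 hu).2
  have h₂ : #{u ∈ D | u ∈ S.biUnion fun y => insert y (G.neighborFinset y)} ≤ _ :=
    card_le_card fun _ hu => (mem_filter.1 hu).2
  omega

theorem five_mul_card_le_two_mul_card_edgeFinset_add (hk : 6 ≤ k)
    (hW : ∀ x, ∃ y, y ≠ x ∧ ¬ G.Adj x y) (hsep : ∀ x, ∃ z, G.degree z + 2 ≤ k ∧ ¬ G.Adj z x)
    {z₁ : W} (hz₁ : G.degree z₁ + 2 ≤ k) :
    5 * Fintype.card W ≤ 2 * #G.edgeFinset + 6 * (k - 1) ^ 2 := by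
  have hC := hG.card_degree_eq_two_le (by omega) hW hsep
  choose z hz hzx using hsep
  set S := insert z₁ ((G.highNeighborFinset k z₁).image z)
  set Q := S.biUnion (G.highNeighborFinset k)
  set E := S.biUnion fun y => insert y (G.neighborFinset y)
  set D : Finset W := {u | G.degree u ≤ 4}
  have hS : ∀ y ∈ S, G.degree y + 2 ≤ k := by
    simp only [S, mem_insert, mem_image]
    rintro y (rfl | ⟨x, -, rfl⟩)
    exacts [hz₁, hz x]
  have hSd : ∀ y ∈ S, G.degree y ≤ k - 2 := fun y hy => by have := hS y hy; omega
  have hcardS : #S ≤ k - 1 := by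
    have := (card_image_le (f := z)).trans (G.card_highNeighborFinset_le k z₁)
    exact (card_insert_le _ _).trans (by omega)
  have hcardQ : #Q ≤ (k - 1) * (k - 2) :=
    (G.card_biUnion_highNeighborFinset_le S hSd k).trans (Nat.mul_le_mul_right _ hcardS)
  have hcardE : #E ≤ (k - 1) * (k - 2 + 1) :=
    (G.card_biUnion_insert_neighborFinset_le S hSd).trans (Nat.mul_le_mul_right _ hcardS)
  have hcardE₁ := G.card_insert_neighborFinset z₁
  have hhubs := hG.two_mul_card_le_sum_card_adj_add S z (mem_insert_self _ _) hS
    (fun x hx => ⟨mem_insert_of_mem (mem_image_of_mem z hx), hzx x⟩) D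
    (fun u hu => by have := (mem_filter.1 hu).2; omega)
  have hmin := hG.two_le_degree (three_le_wheel_degree (by omega)) hW
  have hdis := G.five_mul_card_add_sum_degree_le hmin Q fun x hx => by
    obtain ⟨y, -, hx⟩ := mem_biUnion.1 hx
    have := (mem_filter.1 hx).2
    omega
  have hdc := G.sum_card_filter_adj_le_sum_degree D Q
  obtain ⟨m, rfl⟩ : ∃ m, k = m + 6 := ⟨k - 6, by omega⟩
  simp only [D] at hhubs hdc
  simp only [Nat.reduceSubDiff] at hC hcardQ hcardE hcardE₁ ⊢
  nlinarith

end Wheel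

end IsSemiSat

section FinGraph

variable {n : ℕ} {G : SimpleGraph (Fin n)} [DecidableRel G.Adj]

lemma degS_eq_degree (v : Fin n) : degS G v = G.degree v := by
  rw [degS, ← card_neighborFinset_eq_degree, neighborFinset_def, Set.ncard_eq_toFinset_card']

lemma mem_setAstar_iff {k : ℕ} (hk : 4 ≤ k) {v : Fin n} :
    v ∈ setAstar k G ↔ 2 ≤ G.degree v ∧ G.degree v ≤ k - 2 := by
  simp only [setAstar, setB, setC, Set.mem_union, Set.mem_ofPred_eq, degS_eq_degree]
  omega

end FinGraph

theorem no_grand_connector_bound_general (k n : ℕ) (hk : 6 ≤ k)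
    (G : SimpleGraph (Fin n)) (hG : IsSemiSat (wheel k) G)
    (hdeg : ∀ v : Fin n, degS G v ≤ n - 2)
    (hA : k ≤ (setAstar k G).ncard)
    (hcap : (⋂ v ∈ setAstar k G, G.neighborSet v) = ∅) :
    5 * (n : ℤ) - 6 * ((k : ℤ) - 1) ^ 2 ≤ 2 * (G.edgeSet.ncard : ℤ) := by
  classical
  simp only [degS_eq_degree] at hdeg
  obtain ⟨z₁, hz₁⟩ := Set.nonempty_of_ncard_ne_zero (by omega : (setAstar k G).ncard ≠ 0)
  rw [mem_setAstar_iff (by omega)] at hz₁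
  have hW (x : Fin n) : ∃ y, y ≠ x ∧ ¬ G.Adj x y := by
    refine G.exists_ne_not_adj_of_degree_add_two_le ?_
    have := hdeg x
    have := hdeg z₁
    rw [Fintype.card_fin]
    omega
  have hsep (x : Fin n) : ∃ z, G.degree z + 2 ≤ k ∧ ¬ G.Adj z x := by
    have hx : x ∉ ⋂ v ∈ setAstar k G, G.neighborSet v := hcap ▸ Set.notMem_empty x
    simp only [Set.mem_iInter, mem_neighborSet, not_forall] at hx
    obtain ⟨z, hz, hzx⟩ := hx
    have := ((mem_setAstar_iff (by omega)).1 hz).2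
    exact ⟨z, by omega, hzx⟩
  have h := hG.five_mul_card_le_two_mul_card_edgeFinset_add hk hW hsep (z₁ := z₁) (by omega)
  rw [Fintype.card_fin] at h
  zify [show 1 ≤ k by omega] at h
  rw [← coe_edgeFinset, Set.ncard_coe_finset]
  linarith

/-- Proposition 3.5: if no vertex is adjacent to every vertex of `A*_G`, then
`2e(G) ≥ 5n - 6(k - 1)²`. -/
theorem no_grand_connector_bound (k n : ℕ) (hk : 6 ≤ k) (hn : (k - 1) ^ 2 + 1 ≤ n)
    (G : SimpleGraph (Fin n)) (hG : IsSemiSat (wheel k) G)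
    (hdeg : ∀ v : Fin n, degS G v ≤ n - 2)
    (hA : k ≤ (setAstar k G).ncard)
    (hcap : (⋂ v ∈ setAstar k G, G.neighborSet v) = ∅) :
    5 * (n : ℤ) - 6 * ((k : ℤ) - 1) ^ 2 ≤ 2 * (G.edgeSet.ncard : ℤ) :=
  no_grand_connector_bound_general k n hk G hG hdeg hA hcap
end
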